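/- arXiv:1604.06580 — 5 statements merged into one kernel-verified Lean document; each statement's English description precedes it below -/
import Mathlib

section
/- There exists n₀ ∈ ℕ such that for every n ≥ n₀ the following holds. Let F be the n-fold product on [0,∞)^n of the Borel probability measure on [0,∞) that assigns probability 1/2 each to the values 0 and 1. Then every IR menu M of menu size at most 2^{n/10}, equipped with any choice function t, satisfies Rev_{M,t}(F) < (1 − 1/(10·n)) · (n/2). Consequently Rev_C(F) ≤ (1 − 1/(10·n)) · Rev(F) for C = ⌊2^{n/10}⌋, so the revenue-approximation complexity C(n, 1/n) is at least 2^{Ω(n)}. -/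
/-! For the uniform distribution on `{0,1}^n`, selling every item separately at price `1`
extracts the full surplus `n/2`. For an arbitrary menu, the *deficit* of the type `1_S` is its
unextracted surplus `#S - price`, so the revenue is `n/2` minus the average deficit, and it
suffices that a fixed fraction of the types have deficit at least `1/2`.

A type of deficit `< 1/2` gets each item of `S` with probability `> 1/2`. If its entry also gives
some `i ∉ S` with probability `> 1/2`, then `S ∪ {i}` could buy that entry, and so has deficit
`≥ 1/2`. By double counting, the low-deficit types with at least `m ≈ n/8` such extra items are at
most `n/m` times as many as the high-deficit types. A low-deficit type with fewer extra items is
determined by its menu entry and the set of extra items, so there are at most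
`(C + 1) · #{T | #T ≤ n/8} ≤ 2^n / 20` of them when the menu size `C` is at most `2^(n/10)`. -/

open MeasureTheory ProbabilityTheory Set
open scoped NNReal ENNReal

noncomputable section

/-- The space of buyer types for `n` items: vectors in `[0,∞)^n`. -/
abbrev BuyerType (n : ℕ) := Fin n → ℝ≥0

/-- An `n`-item outcome: allocation probabilities together with a price. -/
abbrev Outcome (n : ℕ) := (Fin n → ℝ) × ℝ

/-- An outcome is valid if all allocation probabilities are in `[0,1]` and the price is `≥ 0`. -/
def ValidOutcome {n : ℕ} (e : Outcome n) : Prop :=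
  (∀ i, 0 ≤ e.1 i ∧ e.1 i ≤ 1) ∧ 0 ≤ e.2

/-- The zero entry `(0,…,0;0)`. -/
def zeroEntry (n : ℕ) : Outcome n := (fun _ => 0, 0)

/-- The utility of buyer type `v` from outcome `e`. -/
def utility {n : ℕ} (e : Outcome n) (v : BuyerType n) : ℝ :=
  (∑ i, e.1 i * (v i : ℝ)) - e.2

/-- An individually rational menu: a set of valid outcomes containing the zero entry. -/
def IRMenu {n : ℕ} (M : Set (Outcome n)) : Prop :=
  (∀ e ∈ M, ValidOutcome e) ∧ zeroEntry n ∈ M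

/-- A choice function for menu `M`: for every buyer type it picks a utility-maximizing
entry of maximal price among the utility-maximizing entries, with Borel-measurable price. -/
def IsChoice {n : ℕ} (M : Set (Outcome n)) (t : BuyerType n → Outcome n) : Prop :=
  (∀ v, t v ∈ M) ∧
  (∀ v, ∀ e ∈ M, utility e v ≤ utility (t v) v) ∧
  (∀ v, ∀ e ∈ M, utility e v = utility (t v) v → e.2 ≤ (t v).2) ∧
  Measurable fun v => (t v).2

/-- The revenue of a menu equipped with choice function `t` from distribution `F`. -/
def revenue {n : ℕ} (t : BuyerType n → Outcome n) (F : Measure (BuyerType n)) : ℝ≥0∞ :=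
  ∫⁻ v, ENNReal.ofReal ((t v).2) ∂F

/-- The menu size: the number of entries other than the zero entry. -/
def menuSize {n : ℕ} (M : Set (Outcome n)) : ℕ∞ :=
  (M \ {zeroEntry n}).encard

/-- The optimal revenue obtainable from `F` by an IR menu with a choice function. -/
def Rev {n : ℕ} (F : Measure (BuyerType n)) : ℝ≥0∞ :=
  ⨆ (Mt : Set (Outcome n) × (BuyerType n → Outcome n))
    (_ : IRMenu Mt.1 ∧ IsChoice Mt.1 Mt.2), revenue Mt.2 F

/-- The optimal revenue obtainable from `F` by an IR menu of menu size at most `C`. -/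
def RevC {n : ℕ} (C : ℕ) (F : Measure (BuyerType n)) : ℝ≥0∞ :=
  ⨆ (Mt : Set (Outcome n) × (BuyerType n → Outcome n))
    (_ : IRMenu Mt.1 ∧ IsChoice Mt.1 Mt.2 ∧ menuSize Mt.1 ≤ (C : ℕ∞)),
    revenue Mt.2 F

/-- Embedding of a single item value as a buyer type for one item. -/
def toOne (x : ℝ≥0) : BuyerType 1 := fun _ => x

/-- The optimal single-item revenue from a value distribution `G` on `[0,∞)`. -/
def Rev1 (G : Measure ℝ≥0) : ℝ≥0∞ := Rev (G.map toOne)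

/-- `EU n H`: the set of buyer types with at most one coordinate strictly greater than `H`. -/
def EU (n : ℕ) (H : ℝ) : Set (BuyerType n) :=
  {v | {i : Fin n | H < (v i : ℝ)}.Subsingleton}

/-- A menu is `E`-exclusive if every entry priced above `E` allocates at most one item with
positive probability. -/
def Exclusive {n : ℕ} (E : ℝ) (M : Set (Outcome n)) : Prop :=
  ∀ e ∈ M, E < e.2 → {i : Fin n | 0 < e.1 i}.Subsingleton


/-- The fair-coin value distribution on `[0,∞)`: value `0` or `1`, each with probability `1/2`. -/
def coin : Measure ℝ≥0 := (2 : ℝ≥0∞)⁻¹ • Measure.dirac 0 + (2 : ℝ≥0∞)⁻¹ • Measure.dirac 1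

instance : IsProbabilityMeasure coin := ⟨by simp [coin, ENNReal.inv_two_add_inv_two]⟩

open Finset

section Cube

variable {ι : Type*} [Fintype ι] [DecidableEq ι]

omit [DecidableEq ι] in
theorem sum_card_eq_card_mul_two_pow :
    ∑ T : Finset ι, #T = Fintype.card ι * 2 ^ (Fintype.card ι - 1) := by
  rw [← Finset.powerset_univ, sum_powerset_apply_card (fun k => k), card_univ,
    ← Nat.sum_range_mul_choose]
  simp only [smul_eq_mul, mul_comm]

theorem card_card_lt_mul_pow_le {a : ℕ} (ha : 0 < a) (m : ℕ) :
    #{T : Finset ι | #T < m} * a ^ (Fintype.card ι - m) ≤ (1 + a) ^ Fintype.card ι := by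
  have hbinom : (1 + a) ^ Fintype.card ι = ∑ T : Finset ι, a ^ #(Finset.univ \ T) := by
    rw [← card_univ, ← prod_const, prod_add, Finset.powerset_univ]
    simp
  rw [hbinom, ← smul_eq_mul, ← sum_const]
  refine (sum_le_sum fun T hT => ?_).trans (sum_le_sum_of_subset (filter_subset _ _))
  have hT : #T < m := (mem_filter.1 hT).2
  exact Nat.pow_le_pow_right ha (by rw [card_univ_sdiff]; omega)

variable (bad : Finset (Finset ι)) (A : Finset ι → Finset ι)

theorem card_many_flips_mul_le (m : ℕ)
    (hflip : ∀ S ∉ bad, ∀ i ∈ A S \ S, insert i S ∈ bad) :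
    #{S ∈ badᶜ | m ≤ #(A S \ S)} * m ≤ #bad * Fintype.card ι := by
  set G := {S ∈ badᶜ | m ≤ #(A S \ S)}
  calc #G * m ≤ ∑ S ∈ G, #(A S \ S) := by
        rw [← smul_eq_mul, ← sum_const]
        exact sum_le_sum fun S hS => (mem_filter.1 hS).2
    _ = #(G.sigma fun S => A S \ S) := (card_sigma _ _).symm
    _ ≤ #(bad ×ˢ (Finset.univ : Finset ι)) := by
        refine card_le_card_of_injOn (fun p => (insert p.2 p.1, p.2)) ?_ ?_
        · rintro ⟨S, i⟩ hp
          simp only [coe_sigma, Set.mem_sigma_iff, mem_coe] at hp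
          exact mem_product.2
            ⟨hflip S (mem_compl.1 (mem_filter.1 hp.1).1) i hp.2, Finset.mem_univ _⟩
        · rintro ⟨S, i⟩ hp ⟨S', i'⟩ hp' h
          simp only [coe_sigma, Set.mem_sigma_iff, mem_coe, Prod.mk.injEq] at hp hp' h
          obtain ⟨hins, rfl⟩ := h
          have := congrArg (Finset.erase · i) hins
          simp only [erase_insert (mem_sdiff.1 hp.2).2, erase_insert (mem_sdiff.1 hp'.2).2] at this
          rw [this]
    _ = #bad * Fintype.card ι := by rw [card_product, card_univ]

theorem card_few_flips_le (m : ℕ) (R : Finset (Finset ι))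
    (hsub : ∀ S ∉ bad, S ⊆ A S) (hR : ∀ S ∉ bad, A S ∈ R) :
    #{S ∈ badᶜ | #(A S \ S) < m} ≤ #R * #{T : Finset ι | #T < m} := by
  rw [← card_product]
  refine card_le_card_of_injOn (fun S => (A S, A S \ S)) ?_ ?_
  · intro S hS
    simp only [coe_filter, Finset.mem_compl] at hS
    exact mem_product.2 ⟨hR S hS.1, mem_filter.2 ⟨Finset.mem_univ _, hS.2⟩⟩
  · intro S hS S' hS' h
    simp only [coe_filter, Finset.mem_compl, Prod.mk.injEq] at hS hS' h
    rw [← Finset.sdiff_sdiff_eq_self (hsub S hS.1), ← Finset.sdiff_sdiff_eq_self (hsub S' hS'.1),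
      h.2, h.1]

theorem two_pow_card_mul_le (m : ℕ) (R : Finset (Finset ι)) (hsub : ∀ S ∉ bad, S ⊆ A S)
    (hR : ∀ S ∉ bad, A S ∈ R) (hflip : ∀ S ∉ bad, ∀ i ∈ A S \ S, insert i S ∈ bad) :
    2 ^ Fintype.card ι * m ≤ #bad * (m + Fintype.card ι) + #R * #{T : Finset ι | #T < m} * m := by
  have hsplit : #bad + #{S ∈ badᶜ | m ≤ #(A S \ S)} + #{S ∈ badᶜ | #(A S \ S) < m} =
      2 ^ Fintype.card ι := by
    have hgood := card_filter_add_card_filter_not (s := badᶜ) fun S => m ≤ #(A S \ S)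
    simp only [not_le] at hgood
    rw [add_assoc, hgood, add_comm, card_compl_add_card, Fintype.card_finset]
  have hmany := card_many_flips_mul_le bad A m hflip
  have hfew := Nat.mul_le_mul_right m (card_few_flips_le bad A m R hsub hR)
  rw [← hsplit]
  nlinarith

end Cube

theorem floor_two_rpow_div_ten_le (n : ℕ) : ⌊(2 : ℝ) ^ ((n : ℝ) / 10)⌋₊ ≤ 2 * 2 ^ (n / 10) := by
  refine Nat.floor_le_of_le ?_
  calc (2 : ℝ) ^ ((n : ℝ) / 10) ≤ 2 ^ (((n / 10 + 1 : ℕ)) : ℝ) := by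
        refine Real.rpow_le_rpow_of_exponent_le one_le_two ?_
        rw [div_le_iff₀ (by norm_num)]
        exact_mod_cast (by omega : n ≤ (n / 10 + 1) * 10)
    _ = 2 * 2 ^ (n / 10) := by
        rw [Real.rpow_natCast, pow_succ, mul_comm]
    _ = ((2 * 2 ^ (n / 10) : ℕ) : ℝ) := by push_cast; ring

theorem eighty_mul_two_pow_mul_eight_pow_le {n : ℕ} (hn : 100 ≤ n) :
    80 * 2 ^ (n / 10) * 8 ^ n ≤ 2 ^ n * 7 ^ (n - (n / 8 + 1)) :=
  calc 80 * 2 ^ (n / 10) * 8 ^ n ≤ 2 ^ 7 * 2 ^ (n / 10) * (2 ^ 3) ^ n := by gcongr <;> norm_num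
    _ = 2 ^ (7 + n / 10 + 3 * n) := by rw [pow_add, pow_add, pow_mul]
    _ ≤ 2 ^ (n + 22 * ((n - (n / 8 + 1)) / 8)) := Nat.pow_le_pow_right two_pos (by omega)
    _ = 2 ^ n * (2 ^ 22) ^ ((n - (n / 8 + 1)) / 8) := by rw [pow_add, pow_mul]
    _ ≤ 2 ^ n * (7 ^ 8) ^ ((n - (n / 8 + 1)) / 8) :=
        Nat.mul_le_mul_left _ (Nat.pow_le_pow_left (by norm_num) _)
    _ ≤ 2 ^ n * 7 ^ (n - (n / 8 + 1)) := by
        rw [← pow_mul]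
        gcongr
        · norm_num
        · omega

theorem twenty_mul_card_card_lt_le {n : ℕ} (hn : 100 ≤ n) :
    20 * (⌊(2 : ℝ) ^ ((n : ℝ) / 10)⌋₊ + 1) * #{T : Finset (Fin n) | #T < n / 8 + 1} ≤ 2 ^ n := by
  have htail := card_card_lt_mul_pow_le (ι := Fin n) (a := 7) (by norm_num) (n / 8 + 1)
  rw [Fintype.card_fin, show 1 + 7 = 8 from rfl] at htail
  have hfloor := floor_two_rpow_div_ten_le n
  have hpos : 0 < 7 ^ (n - (n / 8 + 1)) := by positivity
  refine Nat.le_of_mul_le_mul_right ?_ hpos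
  calc 20 * (⌊(2 : ℝ) ^ ((n : ℝ) / 10)⌋₊ + 1) * #{T : Finset (Fin n) | #T < n / 8 + 1} *
        7 ^ (n - (n / 8 + 1))
      = 20 * (⌊(2 : ℝ) ^ ((n : ℝ) / 10)⌋₊ + 1) *
          (#{T : Finset (Fin n) | #T < n / 8 + 1} * 7 ^ (n - (n / 8 + 1))) := by ring
    _ ≤ 80 * 2 ^ (n / 10) * 8 ^ n := by
        refine Nat.mul_le_mul ?_ htail
        have : 1 ≤ 2 ^ (n / 10) := Nat.one_le_two_pow
        omega
    _ ≤ 2 ^ n * 7 ^ (n - (n / 8 + 1)) := eighty_mul_two_pow_mul_eight_pow_le hn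

def cubeType {n : ℕ} (S : Finset (Fin n)) : BuyerType n := fun i => if i ∈ S then 1 else 0

theorem pi_coin_eq (n : ℕ) :
    Measure.pi (fun _ : Fin n => coin) =
      ((2 : ℝ≥0∞) ^ n)⁻¹ • ∑ S : Finset (Fin n), Measure.dirac (cubeType S) := by
  refine Measure.pi_eq fun s hs => ?_
  have hcoin : ∀ i, coin (s i) = (2 : ℝ≥0∞)⁻¹ * (s i).indicator 1 1
      + (2 : ℝ≥0∞)⁻¹ * (s i).indicator 1 0 := by
    intro i
    simp [coin, Measure.dirac_apply' _ (hs i), add_comm]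
  have hdirac : ∀ S : Finset (Fin n), Measure.dirac (cubeType S) (Set.univ.pi s) =
      (∏ i ∈ S, (s i).indicator 1 1) * ∏ i ∈ Finset.univ \ S, (s i).indicator 1 0 := by
    intro S
    rw [Measure.dirac_apply' _ (MeasurableSet.univ_pi hs), ← Finset.coe_univ,
      Set.indicator_pi_one_apply, ← Finset.prod_sdiff (Finset.subset_univ S), mul_comm]
    congr 1
    · exact Finset.prod_congr rfl fun i hi => by simp [cubeType, hi]
    · exact Finset.prod_congr rfl fun i hi => by simp [cubeType, (Finset.mem_sdiff.1 hi).2]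
  simp_rw [hcoin, Finset.prod_add, Finset.powerset_univ, Measure.smul_apply,
    Measure.finsetSum_apply, hdirac, smul_eq_mul, Finset.mul_sum]
  refine Finset.sum_congr rfl fun S _ => ?_
  have hS : #S ≤ n := by simpa using S.card_le_univ
  have hpow : ((2 : ℝ≥0∞) ^ n)⁻¹ = 2⁻¹ ^ #S * 2⁻¹ ^ #(Finset.univ \ S) := by
    rw [← pow_add, Finset.card_univ_sdiff, Fintype.card_fin, Nat.add_sub_cancel' hS,
      ENNReal.inv_pow]
  rw [Finset.prod_mul_distrib, Finset.prod_mul_distrib, Finset.prod_const, Finset.prod_const, hpow]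
  ring

theorem lintegral_pi_coin {n : ℕ} (f : BuyerType n → ℝ≥0∞) :
    ∫⁻ v, f v ∂Measure.pi (fun _ : Fin n => coin) =
      ((2 : ℝ≥0∞) ^ n)⁻¹ * ∑ S : Finset (Fin n), f (cubeType S) := by
  simp [pi_coin_eq]

theorem revenue_pi_coin {n : ℕ} {t : BuyerType n → Outcome n}
    (ht : ∀ S, 0 ≤ (t (cubeType S)).2) :
    revenue t (Measure.pi fun _ : Fin n => coin) =
      ENNReal.ofReal ((∑ S : Finset (Fin n), (t (cubeType S)).2) / 2 ^ n) := by
  rw [revenue, lintegral_pi_coin, ← ENNReal.ofReal_sum_of_nonneg fun S _ => ht S,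
    ENNReal.ofReal_div_of_pos (by positivity), ENNReal.div_eq_inv_mul,
    ENNReal.ofReal_pow zero_le_two, ENNReal.ofReal_ofNat]

theorem IRMenu.exists_finset_card_le {n : ℕ} {M : Set (Outcome n)} (hM : IRMenu M) {C : ℕ}
    (hsize : menuSize M ≤ C) : ∃ s : Finset (Outcome n), ↑s = M ∧ #s ≤ C + 1 := by
  have hM_encard : M.encard ≤ (C + 1 : ℕ) := by
    rw [← Set.encard_sdiff_singleton_add_one hM.2, Nat.cast_succ]
    gcongr
    exact hsize
  obtain ⟨s, rfl⟩ := (Set.finite_of_encard_le_coe hM_encard).exists_finset_coe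
  rw [Set.encard_coe_eq_coe_finsetCard, Nat.cast_le] at hM_encard
  exact ⟨s, rfl, hM_encard⟩

def highItems {n : ℕ} (e : Outcome n) : Finset (Fin n) := {i | 1 / 2 < e.1 i}

section Menu

variable {n : ℕ} {M : Set (Outcome n)} {t : BuyerType n → Outcome n}

theorem utility_cubeType (e : Outcome n) (S : Finset (Fin n)) :
    utility e (cubeType S) = ∑ i ∈ S, e.1 i - e.2 := by
  simp [utility, cubeType, apply_ite NNReal.toReal, mul_ite, Finset.sum_ite_mem]

theorem utility_cubeType_insert (e : Outcome n) {S : Finset (Fin n)} {i : Fin n} (hi : i ∉ S) :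
    utility e (cubeType (insert i S)) = utility e (cubeType S) + e.1 i := by
  rw [utility_cubeType, utility_cubeType, Finset.sum_insert hi]
  ring

theorem IsChoice.utility_nonneg (hM : IRMenu M) (ht : IsChoice M t) (v : BuyerType n) :
    0 ≤ utility (t v) v := by
  simpa [utility, zeroEntry] using ht.2.1 v _ hM.2

def deficit (t : BuyerType n → Outcome n) (S : Finset (Fin n)) : ℝ :=
  #S - (t (cubeType S)).2

theorem deficit_eq_sum_add_utility (t : BuyerType n → Outcome n) (S : Finset (Fin n)) :
    deficit t S = ∑ i ∈ S, (1 - (t (cubeType S)).1 i) + utility (t (cubeType S)) (cubeType S) := by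
  rw [deficit, utility_cubeType, Finset.sum_sub_distrib]
  simp

theorem IsChoice.utility_le_deficit (hM : IRMenu M) (ht : IsChoice M t) (S : Finset (Fin n)) :
    utility (t (cubeType S)) (cubeType S) ≤ deficit t S := by
  rw [deficit_eq_sum_add_utility, le_add_iff_nonneg_left]
  exact Finset.sum_nonneg fun i _ => sub_nonneg.2 ((hM.1 _ (ht.1 _)).1 i).2

theorem IsChoice.deficit_nonneg (hM : IRMenu M) (ht : IsChoice M t) (S : Finset (Fin n)) :
    0 ≤ deficit t S :=
  (ht.utility_nonneg hM _).trans (ht.utility_le_deficit hM S)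

theorem IsChoice.half_lt_alloc_of_deficit_lt (hM : IRMenu M) (ht : IsChoice M t)
    {S : Finset (Fin n)} (hS : deficit t S < 1 / 2) {i : Fin n} (hi : i ∈ S) :
    1 / 2 < (t (cubeType S)).1 i := by
  have hterm : 1 - (t (cubeType S)).1 i ≤ ∑ j ∈ S, (1 - (t (cubeType S)).1 j) :=
    Finset.single_le_sum (fun j _ => sub_nonneg.2 ((hM.1 _ (ht.1 _)).1 j).2) hi
  linarith [deficit_eq_sum_add_utility t S, ht.utility_nonneg hM (cubeType S)]

theorem IsChoice.half_le_deficit_insert (hM : IRMenu M) (ht : IsChoice M t)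
    {S : Finset (Fin n)} {i : Fin n} (hi : i ∉ S) (hx : 1 / 2 < (t (cubeType S)).1 i) :
    1 / 2 ≤ deficit t (insert i S) :=
  calc 1 / 2 ≤ utility (t (cubeType S)) (cubeType S) + (t (cubeType S)).1 i := by
        linarith [ht.utility_nonneg hM (cubeType S)]
    _ = utility (t (cubeType S)) (cubeType (insert i S)) := (utility_cubeType_insert _ hi).symm
    _ ≤ utility (t (cubeType (insert i S))) (cubeType (insert i S)) := ht.2.1 _ _ (ht.1 _)
    _ ≤ deficit t (insert i S) := ht.utility_le_deficit hM _

theorem sum_price_eq (t : BuyerType n → Outcome n) :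
    ∑ S : Finset (Fin n), (t (cubeType S)).2 = n * 2 ^ (n - 1) - ∑ S, deficit t S := by
  have hcard := congrArg (Nat.cast (R := ℝ)) (sum_card_eq_card_mul_two_pow (ι := Fin n))
  push_cast [Fintype.card_fin] at hcard
  simp [deficit, Finset.sum_sub_distrib, hcard]

theorem IsChoice.nineteen_mul_two_pow_le_card_half_le_deficit (hn : 100 ≤ n) (hM : IRMenu M)
    (ht : IsChoice M t) (hsize : menuSize M ≤ ⌊(2 : ℝ) ^ ((n : ℝ) / 10)⌋₊) :
    19 * 2 ^ n ≤ 180 * #{S : Finset (Fin n) | 1 / 2 ≤ deficit t S} := by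
  obtain ⟨s, rfl, hs⟩ := hM.exists_finset_card_le hsize
  set bad : Finset (Finset (Fin n)) := {S | 1 / 2 ≤ deficit t S}
  have hbad : ∀ {S}, S ∉ bad ↔ deficit t S < 1 / 2 := by simp [bad]
  have hcount := two_pow_card_mul_le bad (fun S => highItems (t (cubeType S))) (n / 8 + 1)
    (s.image highItems)
    (fun S hS i hi => by simpa [highItems] using ht.half_lt_alloc_of_deficit_lt hM (hbad.1 hS) hi)
    (fun S _ => Finset.mem_image_of_mem _ (ht.1 _))
    (fun S _ i hi => by
      simp only [highItems, Finset.mem_sdiff, mem_filter, Finset.mem_univ, true_and] at hi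
      simpa [bad] using ht.half_le_deficit_insert hM hi.2 hi.1)
  rw [Fintype.card_fin] at hcount
  have hsmall := twenty_mul_card_card_lt_le hn
  have hR : #(s.image highItems) ≤ ⌊(2 : ℝ) ^ ((n : ℝ) / 10)⌋₊ + 1 := card_image_le.trans hs
  have hm : n / 8 + 1 + n ≤ 9 * (n / 8 + 1) := by omega
  have hRT := Nat.mul_le_mul_right (#{T : Finset (Fin n) | #T < n / 8 + 1} * (n / 8 + 1))
    (Nat.mul_le_mul_left 20 hR)
  refine le_of_mul_le_mul_right ?_ (Nat.succ_pos (n / 8))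
  nlinarith [Nat.mul_le_mul_left #bad hm]

theorem IsChoice.sum_price_lt (hn : 100 ≤ n) (hM : IRMenu M) (ht : IsChoice M t)
    (hsize : menuSize M ≤ ⌊(2 : ℝ) ^ ((n : ℝ) / 10)⌋₊) :
    ∑ S : Finset (Fin n), (t (cubeType S)).2 < 2 ^ n * (n / 2 - 1 / 20) := by
  set bad : Finset (Finset (Fin n)) := {S | 1 / 2 ≤ deficit t S}
  have hbad : 19 * (2 : ℝ) ^ n ≤ 180 * #bad := by
    exact_mod_cast ht.nineteen_mul_two_pow_le_card_half_le_deficit hn hM hsize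
  have hdeficit : (#bad : ℝ) / 2 ≤ ∑ S, deficit t S :=
    calc (#bad : ℝ) / 2 = ∑ S ∈ bad, 1 / 2 := by rw [sum_const, nsmul_eq_mul]; ring
      _ ≤ ∑ S ∈ bad, deficit t S := sum_le_sum fun S hS => (mem_filter.1 hS).2
      _ ≤ ∑ S, deficit t S :=
        sum_le_sum_of_subset_of_nonneg (subset_univ _) fun S _ _ => ht.deficit_nonneg hM S
  have hpow : (2 : ℝ) ^ n = 2 * 2 ^ (n - 1) := (mul_pow_sub_one (by omega) 2).symm
  rw [sum_price_eq]
  rw [hpow] at hbad ⊢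
  linarith [pow_pos (two_pos (α := ℝ)) (n - 1)]

theorem IsChoice.revenue_lt (hn : 100 ≤ n) (hM : IRMenu M) (ht : IsChoice M t)
    (hsize : menuSize M ≤ ⌊(2 : ℝ) ^ ((n : ℝ) / 10)⌋₊) :
    revenue t (Measure.pi fun _ : Fin n => coin) <
      ENNReal.ofReal ((1 - 1 / (10 * (n : ℝ))) * ((n : ℝ) / 2)) := by
  have hn' : (100 : ℝ) ≤ n := by exact_mod_cast hn
  have hbound : (1 - 1 / (10 * (n : ℝ))) * ((n : ℝ) / 2) = n / 2 - 1 / 20 := by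
    field_simp
    ring
  rw [revenue_pi_coin fun S => (hM.1 _ (ht.1 _)).2, hbound,
    ENNReal.ofReal_lt_ofReal_iff (by linarith), div_lt_iff₀ (by positivity), mul_comm]
  exact ht.sum_price_lt hn hM hsize

end Menu

section UnitPrice

variable {n : ℕ}

def unitPriceEntry (S : Finset (Fin n)) : Outcome n :=
  (fun i => if i ∈ S then 1 else 0, #S)

def unitPriceMenu (n : ℕ) : Set (Outcome n) := Set.range unitPriceEntry

def unitPriceChoice (v : BuyerType n) : Outcome n := unitPriceEntry {i | 1 ≤ v i}

theorem utility_unitPriceEntry (S : Finset (Fin n)) (v : BuyerType n) :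
    utility (unitPriceEntry S) v = ∑ i ∈ S, ((v i : ℝ) - 1) := by
  simp [utility, unitPriceEntry, ite_mul, Finset.sum_ite_mem, Finset.sum_sub_distrib]

theorem utility_unitPriceEntry_add_le (S : Finset (Fin n)) (v : BuyerType n) :
    utility (unitPriceEntry S) v + ∑ i ∈ S with ¬1 ≤ v i, (1 - (v i : ℝ)) ≤
      utility (unitPriceChoice v) v := by
  rw [unitPriceChoice, utility_unitPriceEntry, utility_unitPriceEntry,
    ← sum_filter_add_sum_filter_not S (fun i => 1 ≤ v i)]
  have hcancel : ∑ i ∈ S with ¬1 ≤ v i, ((v i : ℝ) - 1) + ∑ i ∈ S with ¬1 ≤ v i, (1 - (v i : ℝ))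
      = 0 := by
    rw [← sum_add_distrib]
    simp
  rw [add_assoc, hcancel, add_zero]
  refine sum_le_sum_of_subset_of_nonneg (filter_subset_filter _ (subset_univ S)) fun i hi _ => ?_
  have : (1 : ℝ) ≤ v i := by exact_mod_cast (mem_filter.1 hi).2
  linarith

theorem isChoice_unitPriceChoice : IsChoice (unitPriceMenu n) unitPriceChoice := by
  refine ⟨fun v => ⟨_, rfl⟩, ?_, ?_, ?_⟩
  · rintro v _ ⟨S, rfl⟩
    refine le_trans ?_ (utility_unitPriceEntry_add_le S v)
    refine le_add_of_nonneg_right (sum_nonneg fun i hi => ?_)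
    have : (v i : ℝ) < 1 := by exact_mod_cast not_le.1 (mem_filter.1 hi).2
    linarith
  · rintro v _ ⟨S, rfl⟩ heq
    have hsum := utility_unitPriceEntry_add_le S v
    rw [← heq, add_le_iff_nonpos_right] at hsum
    have hsub : S ⊆ ({i | 1 ≤ v i} : Finset (Fin n)) := by
      intro i hiS
      by_contra hi
      have hvi : (v i : ℝ) < 1 := by simpa using hi
      have hterm : 1 - (v i : ℝ) ≤ ∑ j ∈ S with ¬1 ≤ v j, (1 - (v j : ℝ)) := by
        refine single_le_sum (f := fun j => 1 - (v j : ℝ)) (fun j hj => ?_)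
          (mem_filter.2 ⟨hiS, not_le.2 hvi⟩)
        have : (v j : ℝ) < 1 := by exact_mod_cast not_le.1 (mem_filter.1 hj).2
        linarith
      linarith
    simp only [unitPriceChoice, unitPriceEntry]
    exact_mod_cast Finset.card_le_card hsub
  · have : (fun v : BuyerType n => (unitPriceChoice v).2) =
        fun v => ∑ i, if 1 ≤ v i then (1 : ℝ) else 0 := by
      funext v
      simp [unitPriceChoice, unitPriceEntry, Finset.sum_boole]
    rw [this]
    exact Finset.measurable_sum _ fun i _ =>
      Measurable.ite (measurableSet_le measurable_const (measurable_pi_apply i))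
        measurable_const measurable_const

theorem irMenu_unitPriceMenu : IRMenu (unitPriceMenu n) := by
  refine ⟨?_, ⟨∅, by simp [unitPriceEntry, zeroEntry]⟩⟩
  rintro _ ⟨S, rfl⟩
  refine ⟨fun i => ?_, Nat.cast_nonneg _⟩
  by_cases hi : i ∈ S <;> simp [unitPriceEntry, hi]

theorem revenue_unitPriceChoice (hn : 0 < n) :
    revenue unitPriceChoice (Measure.pi fun _ : Fin n => coin) = ENNReal.ofReal (n / 2) := by
  have hcube : ∀ S : Finset (Fin n), unitPriceChoice (cubeType S) = unitPriceEntry S := by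
    intro S
    have hS : ({i | 1 ≤ cubeType S i} : Finset (Fin n)) = S := by
      ext i
      simp only [mem_filter]
      by_cases hi : i ∈ S <;> simp [cubeType, hi]
    rw [unitPriceChoice, hS]
  rw [revenue_pi_coin fun S => Nat.cast_nonneg _]
  simp only [hcube, unitPriceEntry]
  have hcard := congrArg (Nat.cast (R := ℝ)) (sum_card_eq_card_mul_two_pow (ι := Fin n))
  push_cast [Fintype.card_fin] at hcard
  rw [hcard, ← pow_sub_one_mul hn.ne' (2 : ℝ), mul_comm (n : ℝ), mul_div_mul_left _ _ (by positivity)]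

end UnitPrice

/-- For all large enough `n`, every IR menu of size at most `2^(n/10)` obtains
revenue strictly less than `(1 - 1/(10n))·(n/2)` from the i.i.d. fair-coin distribution on
`n` items; consequently `Rev_C ≤ (1 - 1/(10n))·Rev` for `C = ⌊2^(n/10)⌋`. -/
theorem exponential_menu_size_lower_bound :
    ∃ n₀ : ℕ, ∀ n : ℕ, n₀ ≤ n →
      (∀ (M : Set (Outcome n)) (t : BuyerType n → Outcome n),
          IRMenu M → IsChoice M t →
          menuSize M ≤ ((⌊(2 : ℝ) ^ ((n : ℝ) / 10)⌋₊ : ℕ) : ℕ∞) →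
          revenue t (Measure.pi fun _ : Fin n => coin) <
            ENNReal.ofReal ((1 - 1 / (10 * (n : ℝ))) * ((n : ℝ) / 2))) ∧
      RevC ⌊(2 : ℝ) ^ ((n : ℝ) / 10)⌋₊ (Measure.pi fun _ : Fin n => coin) ≤
        ENNReal.ofReal (1 - 1 / (10 * (n : ℝ))) * Rev (Measure.pi fun _ : Fin n => coin) := by
  refine ⟨100, fun n hn => ⟨fun M t hM ht hsize => ht.revenue_lt hn hM hsize, ?_⟩⟩
  have hn' : (100 : ℝ) ≤ n := by exact_mod_cast hn
  have hRev : ENNReal.ofReal (n / 2) ≤ Rev (Measure.pi fun _ : Fin n => coin) := by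
    rw [← revenue_unitPriceChoice (by omega)]
    exact le_iSup₂_of_le (unitPriceMenu n, unitPriceChoice)
      ⟨irMenu_unitPriceMenu, isChoice_unitPriceChoice⟩ le_rfl
  calc RevC ⌊(2 : ℝ) ^ ((n : ℝ) / 10)⌋₊ (Measure.pi fun _ : Fin n => coin)
      ≤ ENNReal.ofReal ((1 - 1 / (10 * (n : ℝ))) * ((n : ℝ) / 2)) :=
        iSup₂_le fun Mt h => (h.2.1.revenue_lt hn h.1 h.2.2).le
    _ = ENNReal.ofReal (1 - 1 / (10 * (n : ℝ))) * ENNReal.ofReal (n / 2) := by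
        refine ENNReal.ofReal_mul ?_
        rw [sub_nonneg, div_le_one (by positivity)]
        linarith
    _ ≤ ENNReal.ofReal (1 - 1 / (10 * (n : ℝ))) * Rev (Measure.pi fun _ : Fin n => coin) := by
        gcongr
end
end

section
/- Let n ∈ ℕ, let F be a Borel probability measure on [0,∞)^n, and let B ⊆ A ⊆ [0,∞)^n be Borel sets. Then F(B) · Rev(F|_B) ≤ F(A) · Rev(F|_A) in [0,∞], with the convention that F(S) · Rev(F|_S) := 0 whenever F(S) = 0. -/
open MeasureTheory ProbabilityTheory Set
open scoped NNReal ENNReal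

noncomputable section

/-! `F(S) · F|_S` is just the restriction of `F` to `S`, and `Rev` is positively homogeneous
and monotone in the measure, since each menu's revenue is an integral against it. -/

section Revenue

variable {n : ℕ}

lemma revenue_smul (c : ℝ≥0∞) (t : BuyerType n → Outcome n) (μ : Measure (BuyerType n)) :
    revenue t (c • μ) = c * revenue t μ :=
  lintegral_smul_measure c _

lemma revenue_mono (t : BuyerType n → Outcome n) {μ ν : Measure (BuyerType n)} (h : μ ≤ ν) :
    revenue t μ ≤ revenue t ν :=
  lintegral_mono' h le_rfl

lemma rev_smul (c : ℝ≥0∞) (μ : Measure (BuyerType n)) : Rev (c • μ) = c * Rev μ := by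
  simp only [Rev, revenue_smul, ENNReal.mul_iSup]

lemma rev_mono {μ ν : Measure (BuyerType n)} (h : μ ≤ ν) : Rev μ ≤ Rev ν :=
  iSup₂_mono fun Mt _ => revenue_mono Mt.2 h

end Revenue

lemma ProbabilityTheory.smul_cond_eq_restrict {Ω : Type*} [MeasurableSpace Ω] {μ : Measure Ω}
    {s : Set Ω} (hs : μ s ≠ ∞) : μ s • μ[|s] = μ.restrict s := by
  by_cases hs₀ : μ s = 0
  · simp [hs₀, Measure.restrict_eq_zero.mpr hs₀]
  · rw [cond, smul_smul, ENNReal.mul_inv_cancel hs₀ hs, one_smul]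

lemma measure_mul_rev_cond {n : ℕ} (μ : Measure (BuyerType n)) [IsFiniteMeasure μ]
    (s : Set (BuyerType n)) : μ s * Rev μ[|s] = Rev (μ.restrict s) := by
  rw [← rev_smul, smul_cond_eq_restrict (measure_ne_top μ s)]

/-- `F[|S]` is the zero measure when `F S = 0`, so the convention `F(S)·Rev(F|_S) = 0`
holds automatically. -/
theorem subset_restricted_rev_le_general
    (n : ℕ) (F : Measure (BuyerType n)) (hF : IsProbabilityMeasure F)
    (A B : Set (BuyerType n)) (hBA : B ⊆ A) :
    F B * Rev (F[|B]) ≤ F A * Rev (F[|A]) := by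
  rw [measure_mul_rev_cond F B, measure_mul_rev_cond F A]
  exact rev_mono (Measure.restrict_mono_set F hBA)

/-- For Borel sets `B ⊆ A`, one has `F(B)·Rev(F|_B) ≤ F(A)·Rev(F|_A)`
(here `F|_S` is the conditional measure, which is the zero measure when `F(S) = 0`,
so the convention `F(S)·Rev(F|_S) = 0` for `F(S) = 0` holds automatically). -/
theorem subset_restricted_rev_le
    (n : ℕ) (F : Measure (BuyerType n)) (hF : IsProbabilityMeasure F)
    (A B : Set (BuyerType n)) (hA : MeasurableSet A) (hB : MeasurableSet B) (hBA : B ⊆ A) :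
    F B * Rev (F[|B]) ≤ F A * Rev (F[|A]) :=
  subset_restricted_rev_le_general n F hF A B hBA

end
end

section
/- Let m ∈ ℕ with m ≥ 1, let p_1,…,p_m be strictly positive real numbers, and let s = Σ_{i=1}^m p_i. Then there exists a partition of the index set {1,…,m} into at most ⌈s⌉ nonempty sets such that for every set B in the partition and every index i ∈ B, one has Σ_{k ∈ B, k ≠ i} p_k ≤ 1. -/
open MeasureTheory ProbabilityTheory Set
open scoped NNReal ENNReal

noncomputable section

private lemma exists_good_bundle {m : ℕ} (p : Fin m → ℝ)
    (s : Finset (Fin m)) (hs : s.Nonempty) :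
    ∃ B : Finset (Fin m), B ⊆ s ∧ B.Nonempty ∧
      (∀ i ∈ B, ∑ k ∈ B.erase i, p k ≤ 1) ∧
      (B = s ∨ 1 < ∑ k ∈ B, p k) := by
  classical
  set Good : Finset (Fin m) → Prop := fun B =>
    B ⊆ s ∧ B.Nonempty ∧ (∀ i ∈ B, ∀ j ∈ s, j ∉ B → p j ≤ p i) ∧
      (∀ i ∈ B, ∑ k ∈ B.erase i, p k ≤ 1) with hGoodDef
  have hC : (s.powerset.filter Good).Nonempty := by
    obtain ⟨a, ha, hamax⟩ := s.exists_max_image p hs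
    refine ⟨{a}, Finset.mem_filter.2 ⟨Finset.mem_powerset.2 (by simpa using ha), ?_⟩⟩
    refine ⟨by simpa using ha, ⟨a, Finset.mem_singleton_self a⟩, ?_, ?_⟩
    · intro i hi j hj hjB
      rcases Finset.mem_singleton.1 hi with rfl
      exact hamax j hj
    · intro i hi
      rcases Finset.mem_singleton.1 hi with rfl
      simp
  obtain ⟨B, hBmem, hBmax⟩ := (s.powerset.filter Good).exists_max_image Finset.card hC
  obtain ⟨hBs, hBne, hBord, hBrem⟩ := (Finset.mem_filter.1 hBmem).2
  have hBs' : B ⊆ s := hBs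
  by_cases hcase : B = s ∨ 1 < ∑ k ∈ B, p k
  · exact ⟨B, hBs', hBne, hBrem, hcase⟩
  push_neg at hcase
  obtain ⟨hBneq, hsum⟩ := hcase
  exfalso
  have hsd : (s \ B).Nonempty := by
    rw [Finset.sdiff_nonempty]
    intro hsub
    exact hBneq (Finset.Subset.antisymm hBs' hsub)
  obtain ⟨j, hj, hjmax⟩ := (s \ B).exists_max_image p hsd
  have hjs : j ∈ s := (Finset.mem_sdiff.1 hj).1
  have hjB : j ∉ B := (Finset.mem_sdiff.1 hj).2
  have hjle : ∀ i ∈ insert j B, p j ≤ p i := by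
    intro i hi
    rcases Finset.mem_insert.1 hi with rfl | hi
    · exact le_refl _
    · exact hBord i hi j hjs hjB
  have hGood' : Good (insert j B) := by
    refine ⟨Finset.insert_subset hjs hBs', Finset.insert_nonempty _ _, ?_, ?_⟩
    · intro i hi k hk hkB
      have hkB' : k ∉ B := fun h => hkB (Finset.mem_insert_of_mem h)
      have hkj : k ≠ j := fun h => hkB (h ▸ Finset.mem_insert_self j B)
      have hkmem : k ∈ s \ B := Finset.mem_sdiff.2 ⟨hk, hkB'⟩
      exact le_trans (hjmax k hkmem) (hjle i hi)
    · intro i hi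
      have hsum' : ∑ k ∈ (insert j B).erase i, p k = (∑ k ∈ insert j B, p k) - p i := by
        have := Finset.sum_erase_add (insert j B) p hi
        linarith
      have hins : ∑ k ∈ insert j B, p k = p j + ∑ k ∈ B, p k :=
        Finset.sum_insert hjB
      have := hjle i hi
      rw [hsum', hins]
      linarith
  have hmem' : insert j B ∈ s.powerset.filter Good :=
    Finset.mem_filter.2 ⟨Finset.mem_powerset.2 hGood'.1, hGood'⟩
  have hcard : (insert j B).card = B.card + 1 := Finset.card_insert_of_notMem hjB
  have := hBmax _ hmem'
  omega

private lemma partition_aux {m : ℕ} (p : Fin m → ℝ) (hp : ∀ i, 0 < p i) :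
    ∀ n (s : Finset (Fin m)), s.card ≤ n →
    ∃ P : Finset (Finset (Fin m)),
      (∀ B ∈ P, B.Nonempty) ∧
      (∀ B ∈ P, ∀ B' ∈ P, B ≠ B' → Disjoint B B') ∧
      (∀ B ∈ P, B ⊆ s) ∧
      (∀ i ∈ s, ∃ B ∈ P, i ∈ B) ∧
      P.card ≤ ⌈∑ i ∈ s, p i⌉₊ ∧
      ∀ B ∈ P, ∀ i ∈ B, ∑ k ∈ B.erase i, p k ≤ 1 := by
  classical
  intro n
  induction n with
  | zero =>
    intro s hs
    have : s = ∅ := Finset.card_eq_zero.1 (Nat.le_zero.1 hs)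
    subst this
    exact ⟨∅, by simp, by simp, by simp, by simp, by simp, by simp⟩
  | succ n ih =>
    intro s hs
    rcases s.eq_empty_or_nonempty with rfl | hsne
    · exact ⟨∅, by simp, by simp, by simp, by simp, by simp, by simp⟩
    obtain ⟨B, hBs, hBne, hBrem, hBalt⟩ := exists_good_bundle p s hsne
    have hcard' : (s \ B).card ≤ n := by
      have h1 : (s \ B).card < s.card := by
        apply Finset.card_lt_card
        rw [Finset.ssubset_iff_of_subset (Finset.sdiff_subset)]
        obtain ⟨b, hb⟩ := hBne
        exact ⟨b, hBs hb, by simp [hb]⟩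
      omega
    obtain ⟨Q, hQne, hQdisj, hQsub, hQcov, hQcard, hQrem⟩ := ih (s \ B) hcard'
    have hBQ : B ∉ Q := by
      intro h
      obtain ⟨b, hb⟩ := hBne
      have := hQsub B h hb
      exact (Finset.mem_sdiff.1 this).2 hb
    have hdisjB : ∀ B' ∈ Q, Disjoint B B' := by
      intro B' hB'
      exact Finset.disjoint_sdiff.mono_right (hQsub B' hB')
    have hsumB_pos : (0:ℝ) < ∑ k ∈ B, p k :=
      Finset.sum_pos (fun i _ => hp i) hBne
    have hsdiff : ∑ k ∈ s \ B, p k = (∑ k ∈ s, p k) - ∑ k ∈ B, p k :=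
      Finset.sum_sdiff_eq_sub hBs
    have hsdpos : (0:ℝ) ≤ ∑ k ∈ s \ B, p k :=
      Finset.sum_nonneg (fun i _ => (hp i).le)
    have hSpos : (0:ℝ) < ∑ k ∈ s, p k := by
      rw [hsdiff] at hsdpos; linarith
    have hceil1 : 1 ≤ ⌈∑ k ∈ s, p k⌉₊ := Nat.one_le_iff_ne_zero.2 (by
      simp only [ne_eq, Nat.ceil_eq_zero, not_le]; exact hSpos)
    refine ⟨insert B Q, ?_, ?_, ?_, ?_, ?_, ?_⟩
    · intro C hC
      rcases Finset.mem_insert.1 hC with rfl | hC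
      · exact hBne
      · exact hQne C hC
    · intro C hC C' hC' hne
      rcases Finset.mem_insert.1 hC with hCB | hC
      · rcases Finset.mem_insert.1 hC' with hC'B | hC'
        · exact absurd (hCB.trans hC'B.symm) hne
        · exact hCB ▸ hdisjB C' hC'
      · rcases Finset.mem_insert.1 hC' with hC'B | hC'
        · exact hC'B ▸ (hdisjB C hC).symm
        · exact hQdisj C hC C' hC' hne
    · intro C hC
      rcases Finset.mem_insert.1 hC with rfl | hC
      · exact hBs
      · exact (hQsub C hC).trans Finset.sdiff_subset
    · intro i hi
      by_cases hiB : i ∈ B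
      · exact ⟨B, Finset.mem_insert_self _ _, hiB⟩
      · obtain ⟨C, hC, hiC⟩ := hQcov i (Finset.mem_sdiff.2 ⟨hi, hiB⟩)
        exact ⟨C, Finset.mem_insert_of_mem hC, hiC⟩
    · rcases hBalt with hBeq | hBgt
      · have hempty : s \ B = ∅ := by rw [hBeq]; exact Finset.sdiff_self s
        rw [hempty] at hQcard
        simp only [Finset.sum_empty, Nat.ceil_zero, Nat.le_zero,
          Finset.card_eq_zero] at hQcard
        subst hQcard
        simpa using hceil1
      · have hc : (insert B Q).card ≤ Q.card + 1 := Finset.card_insert_le _ _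
        have hkey : ⌈∑ k ∈ s \ B, p k⌉₊ ≤ ⌈∑ k ∈ s, p k⌉₊ - 1 := by
          rw [Nat.ceil_le]
          have hle : (∑ k ∈ s, p k) ≤ (⌈∑ k ∈ s, p k⌉₊ : ℝ) := Nat.le_ceil _
          have hcast : ((⌈∑ k ∈ s, p k⌉₊ - 1 : ℕ) : ℝ)
              = (⌈∑ k ∈ s, p k⌉₊ : ℝ) - 1 := by
            push_cast [hceil1]; ring
          rw [hcast, hsdiff]
          linarith
        omega
    · intro C hC
      rcases Finset.mem_insert.1 hC with rfl | hC
      · exact hBrem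
      · exact hQrem C hC

/-- Partition lemma. If `p_1, …, p_m > 0` sum to `s`, then `{1,…,m}` can be
partitioned into at most `⌈s⌉` nonempty sets such that in each set, removing any single
element leaves a total of at most `1`. -/
theorem partition_into_sparse_bundles
    (m : ℕ) (hm : 1 ≤ m) (p : Fin m → ℝ) (hp : ∀ i, 0 < p i) :
    ∃ P : Finset (Finset (Fin m)),
      (∀ B ∈ P, B.Nonempty) ∧
      (∀ B ∈ P, ∀ B' ∈ P, B ≠ B' → Disjoint B B') ∧
      (∀ i, ∃ B ∈ P, i ∈ B) ∧
      P.card ≤ ⌈∑ i, p i⌉₊ ∧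
      ∀ B ∈ P, ∀ i ∈ B, ∑ k ∈ B.erase i, p k ≤ 1 := by
  obtain ⟨P, h1, h2, _, h4, h5, h6⟩ :=
    partition_aux p hp (Finset.univ.card) Finset.univ le_rfl
  exact ⟨P, h1, h2, fun i => h4 i (Finset.mem_univ i), by simpa using h5, h6⟩

end
end

section
/- The bound ⌈s⌉ in the partition lemma is tight: for every integer t ≥ 1 and all sufficiently small ε > 0 and δ > 0 (specifically, whenever (2t−2)·ε + δ ≤ 1), setting m = 2t − 1, p_1 = p_2 = ⋯ = p_{m−1} = 1/2 + ε and p_m = δ (so that s = Σ_{i=1}^m p_i satisfies t − 1 < s ≤ t, i.e., ⌈s⌉ = t), every partition of {1,…,m} into sets B such that Σ_{k ∈ B, k ≠ i} p_k ≤ 1 for every B in the partition and every i ∈ B must consist of at least t sets. -/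
open MeasureTheory ProbabilityTheory Set
open scoped NNReal ENNReal

noncomputable section

/-! Every weight except `p_m = δ` exceeds `1/2`. In a block with three or more elements, remove
the light element if the block contains it, and any element otherwise: at least two heavy
elements remain, of total weight above `1`. So every block has at most two elements, and
covering `2t - 1` elements takes at least `t` blocks. -/

namespace Finset

theorem card_le_two_of_sum_erase_le_one {α : Type*} [DecidableEq α] {p : α → ℝ}
    {a : α} {w : ℝ} (hw : 1 < 2 * w) (hp : ∀ k ≠ a, w ≤ p k) {B : Finset α}
    (hB : ∀ i ∈ B, ∑ k ∈ B.erase i, p k ≤ 1) : #B ≤ 2 := by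
  by_contra! hcard
  obtain ⟨i, hi, ha⟩ : ∃ i ∈ B, a ∉ B.erase i := by
    by_cases haB : a ∈ B
    · exact ⟨a, haB, notMem_erase a B⟩
    · obtain ⟨i, hi⟩ := card_pos.1 (by omega : 0 < #B)
      exact ⟨i, hi, fun h => haB (mem_of_mem_erase h)⟩
  have hheavy : ∀ k ∈ B.erase i, w ≤ p k := fun k hk => hp k (by rintro rfl; exact ha hk)
  have htwo : (2 : ℝ) ≤ #(B.erase i) := by
    rw [card_erase_of_mem hi]
    exact_mod_cast (by omega : 2 ≤ #B - 1)
  have hw0 : 0 ≤ w := by linarith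
  have hsum := (B.erase i).card_nsmul_le_sum p w hheavy
  rw [nsmul_eq_mul] at hsum
  nlinarith [hB i hi]

theorem card_le_mul_card_of_forall_card_le {α : Type*} [Fintype α] [DecidableEq α]
    {P : Finset (Finset α)} {n : ℕ} (hcover : ∀ i, ∃ B ∈ P, i ∈ B)
    (hn : ∀ B ∈ P, #B ≤ n) : Fintype.card α ≤ #P * n := by
  have huniv : univ ⊆ P.biUnion id := fun i _ => by simpa using hcover i
  calc Fintype.card α = #(univ : Finset α) := card_univ.symm
    _ ≤ #(P.biUnion id) := card_le_card huniv
    _ ≤ #P * n := card_biUnion_le_card_mul P id n hn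

theorem sum_range_succ_ite_eq_last (n : ℕ) (c d : ℝ) :
    ∑ i ∈ range (n + 1), (if i = n then d else c) = n * c + d := by
  rw [sum_range_succ, if_pos rfl, sum_congr rfl fun i hi => if_neg (mem_range.1 hi).ne,
    sum_const, card_range, nsmul_eq_mul]

end Finset

/-- Tightness of the partition lemma. With `m = 2t-1`,
`p_1 = ⋯ = p_{m-1} = 1/2 + ε` and `p_m = δ`, where `(2t-2)·ε + δ ≤ 1`, the sum `s` satisfies
`t-1 < s ≤ t` (so `⌈s⌉ = t`), and every partition of `{1,…,m}` into sets in each of which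
removing any single element leaves total at most `1` has at least `t` sets. -/
theorem partition_bound_is_tight
    (t : ℕ) (ht : 1 ≤ t) (ε δ : ℝ) (hε : 0 < ε) (hδ : 0 < δ)
    (hsmall : (2 * (t : ℝ) - 2) * ε + δ ≤ 1)
    (p : Fin (2 * t - 1) → ℝ)
    (hpdef : p = fun i : Fin (2 * t - 1) =>
      if (i : ℕ) = 2 * t - 2 then δ else 1 / 2 + ε) :
    ((t : ℝ) - 1 < ∑ i, p i ∧ ∑ i, p i ≤ t) ∧
    ∀ P : Finset (Finset (Fin (2 * t - 1))),
      (∀ B ∈ P, B.Nonempty) →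
      (∀ B ∈ P, ∀ B' ∈ P, B ≠ B' → Disjoint B B') →
      (∀ i, ∃ B ∈ P, i ∈ B) →
      (∀ B ∈ P, ∀ i ∈ B, ∑ k ∈ B.erase i, p k ≤ 1) →
      t ≤ P.card := by
  subst hpdef
  refine ⟨?_, fun P _ _ hcover hbound => ?_⟩
  · have hsum : ∑ i : Fin (2 * t - 1), (if (i : ℕ) = 2 * t - 2 then δ else 1 / 2 + ε)
        = ((2 * t - 2 : ℕ) : ℝ) * (1 / 2 + ε) + δ := by
      rw [Fin.sum_univ_eq_sum_range (fun i => if i = 2 * t - 2 then δ else 1 / 2 + ε),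
        show 2 * t - 1 = 2 * t - 2 + 1 by omega, Finset.sum_range_succ_ite_eq_last]
    have hcast : ((2 * t - 2 : ℕ) : ℝ) = 2 * t - 2 := by
      rw [Nat.cast_sub (by omega)]; push_cast; ring
    have ht' : (1 : ℝ) ≤ t := by exact_mod_cast ht
    rw [hsum, hcast]
    constructor <;> nlinarith
  · have hblock : ∀ B ∈ P, B.card ≤ 2 := fun B hB =>
      Finset.card_le_two_of_sum_erase_le_one (a := ⟨2 * t - 2, by omega⟩) (w := 1 / 2 + ε)
        (by linarith) (fun k hk => (if_neg fun h => hk (Fin.ext h)).ge) (hbound B hB)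
    have hcount := Finset.card_le_mul_card_of_forall_card_le hcover hblock
    rw [Fintype.card_fin] at hcount
    omega

end
end

section
/- Let m, n ∈ ℕ with m, n ≥ 1, let F be a Borel probability measure on [0,∞)^m, and let G be a Borel probability measure on [0,∞)^n. Then Rev(F × G) ≤ 2 · (Rev(F) + Rev(G)) in [0,∞], where F × G is the product measure on [0,∞)^{m+n}, Rev(F × G) is the optimal revenue for m + n items, and Rev(F) and Rev(G) are the optimal revenues for m items and n items respectively. -/
open MeasureTheory ProbabilityTheory Set
open scoped NNReal ENNReal

noncomputable section

/-! Split the price `p` paid by a buyer of type `(v, w)` according to which of `∑ v`, `∑ w` is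
larger: if `∑ w ≤ ∑ v` then `p ≤ (p - ∑ w)⁺ + ∑ w`. For fixed `w`, `(p - ∑ w)⁺` is at most
what `v` pays in the marginal menu on the first `m` items, and `∑ w · 1[∑ w ≤ ∑ v]` is what
`v` pays when these items are sold as one bundle at price `∑ w`; so both have `F`-expectation at
most `Rev F`. Symmetrically, the two pieces for `∑ v ≤ ∑ w` have expectation at most `Rev G`.

A marginal menu need not break ties in the seller's favour. Scaling its prices by `1 - ε` and
taking the closure repairs this at the cost of a factor `1 - ε`, because every closed IR menu
admits a choice function: maxima exist by compactness, and the maximal price among the optimal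
entries is measurable, being determined by a countable dense set of entries. -/

open Filter Topology

section Basic
variable {n : ℕ}

lemma utility_zeroEntry (v : BuyerType n) : utility (zeroEntry n) v = 0 := by
  simp [utility, zeroEntry]

lemma measurable_utility (e : Outcome n) : Measurable (utility e) := by
  unfold utility; fun_prop

lemma continuous_utility (v : BuyerType n) : Continuous fun e : Outcome n => utility e v := by
  unfold utility; fun_prop

lemma sum_mul_le_sum_of_le_one {x : Fin n → ℝ} (hx : ∀ i, x i ≤ 1) (v : BuyerType n) :
    ∑ i, x i * (v i : ℝ) ≤ ∑ i, (v i : ℝ) :=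
  Finset.sum_le_sum fun i _ => mul_le_of_le_one_left (v i).coe_nonneg (hx i)

lemma measurable_sum_coe : Measurable fun v : BuyerType n => ∑ i, (v i : ℝ) := by
  fun_prop

lemma revenue_le_Rev {M : Set (Outcome n)} {t : BuyerType n → Outcome n} (hM : IRMenu M)
    (ht : IsChoice M t) (F : Measure (BuyerType n)) : revenue t F ≤ Rev F :=
  le_iSup₂ (f := fun (Mt : Set (Outcome n) × (BuyerType n → Outcome n))
    (_ : IRMenu Mt.1 ∧ IsChoice Mt.1 Mt.2) => revenue Mt.2 F) (M, t) ⟨hM, ht⟩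

lemma isClosed_setOf_validOutcome : IsClosed {e : Outcome n | ValidOutcome e} := by
  simp only [ValidOutcome, ofPred_and, ofPred_forall]
  exact (isClosed_iInter fun i => (isClosed_le (by fun_prop) (by fun_prop)).inter
    (isClosed_le (by fun_prop) (by fun_prop))).inter (isClosed_le (by fun_prop) (by fun_prop))

end Basic

section Choice
variable {n : ℕ} {C : Set (Outcome n)}

lemma isCompact_inter_setOf_le_utility (hC : IsClosed C) (hval : ∀ e ∈ C, ValidOutcome e)
    (v : BuyerType n) (a : ℝ) : IsCompact (C ∩ {e | a ≤ utility e v}) := by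
  refine ((isCompact_univ_pi fun _ => isCompact_Icc).prod isCompact_Icc).of_isClosed_subset
    (s := univ.pi (fun _ : Fin n => Icc (0 : ℝ) 1) ×ˢ Icc 0 (∑ i, (v i : ℝ) - a))
    (hC.inter (isClosed_le continuous_const (continuous_utility v))) ?_
  rintro e ⟨heC, hae⟩
  have he := hval e heC
  have := sum_mul_le_sum_of_le_one (fun i => (he.1 i).2) v
  simp only [mem_ofPred_eq, utility] at hae
  exact ⟨fun i _ => he.1 i, he.2, by linarith⟩

lemma exists_max_utility_max_price (hC : IsClosed C) (hval : ∀ e ∈ C, ValidOutcome e)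
    (h0 : zeroEntry n ∈ C) (v : BuyerType n) :
    ∃ e ∈ C, (∀ e' ∈ C, utility e' v ≤ utility e v) ∧
      ∀ e' ∈ C, utility e' v = utility e v → e'.2 ≤ e.2 := by
  have h0' : zeroEntry n ∈ C ∩ {e | 0 ≤ utility e v} := ⟨h0, (utility_zeroEntry v).ge⟩
  obtain ⟨e₀, ⟨he₀C, -⟩, he₀⟩ := (isCompact_inter_setOf_le_utility hC hval v 0).exists_isMaxOn
    ⟨_, h0'⟩ (continuous_utility v).continuousOn
  -- entries of negative utility are beaten by the zero entry
  have hmax : ∀ e ∈ C, utility e v ≤ utility e₀ v := fun e he => by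
    by_cases h : 0 ≤ utility e v
    · exact he₀ ⟨he, h⟩
    · have : utility (zeroEntry n) v ≤ utility e₀ v := he₀ h0'
      rw [utility_zeroEntry] at this
      linarith
  obtain ⟨e, ⟨heC, he⟩, hemax⟩ := (isCompact_inter_setOf_le_utility hC hval v
    (utility e₀ v)).exists_isMaxOn ⟨e₀, he₀C, le_refl (utility e₀ v)⟩ continuous_snd.continuousOn
  have hu : utility e v = utility e₀ v := le_antisymm (hmax e heC) he
  exact ⟨e, heC, fun e' he' => hu ▸ hmax e' he', fun e' he' h => hemax ⟨he', (h.trans hu).ge⟩⟩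

/-- For `D` countable and dense in a closed menu and `u` the optimal utility of `v`, the largest
price among the optimal entries is `⨅ δ > 0` of this (see `iInf_supNearOptimalPrice_le`),
which makes it a measurable function of `v`. -/
def supNearOptimalPrice (D : Set (Outcome n)) (u δ : ℝ) (v : BuyerType n) : ℝ≥0∞ :=
  ⨆ d : D, if u < utility (d : Outcome n) v + δ then ENNReal.ofReal (d : Outcome n).2 else 0

lemma measurable_supNearOptimalPrice {D : Set (Outcome n)} [Countable D]
    {U : BuyerType n → ℝ} (hU : Measurable U) (δ : ℝ) :
    Measurable fun v => supNearOptimalPrice D (U v) δ v := by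
  unfold supNearOptimalPrice
  exact Measurable.iSup fun d => Measurable.ite
    (measurableSet_lt hU ((measurable_utility _).add_const _)) measurable_const measurable_const

variable {D : Set (Outcome n)} {e : Outcome n} {v : BuyerType n}

lemma utility_eq_iSup_of_subset_closure (hD : C ⊆ closure D) (hDC : D ⊆ C) (he : e ∈ C)
    (hmax : ∀ e' ∈ C, utility e' v ≤ utility e v) :
    utility e v = ⨆ d : D, utility (d : Outcome n) v := by
  have : Nonempty D := (closure_nonempty_iff.mp ⟨e, hD he⟩).to_subtype
  have hbdd : BddAbove (range fun d : D => utility (d : Outcome n) v) :=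
    ⟨_, forall_mem_range.2 fun d => hmax d (hDC d.2)⟩
  refine le_antisymm ?_ (ciSup_le fun d => hmax d (hDC d.2))
  exact closure_minimal (fun d hd => le_ciSup hbdd ⟨d, hd⟩)
    (isClosed_le (continuous_utility v) continuous_const) (hD he)

lemma ofReal_price_le_supNearOptimalPrice (hD : C ⊆ closure D) (he : e ∈ C) {u δ : ℝ}
    (hu : u < utility e v + δ) : ENNReal.ofReal e.2 ≤ supNearOptimalPrice D u δ v := by
  have hS : IsClosed {e' : Outcome n |
      utility e' v + δ ≤ u ∨ ENNReal.ofReal e'.2 ≤ supNearOptimalPrice D u δ v} :=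
    (isClosed_le ((continuous_utility v).add continuous_const) continuous_const).union
      (isClosed_le (ENNReal.continuous_ofReal.comp continuous_snd) continuous_const)
  have hDS : D ⊆ {e' : Outcome n |
      utility e' v + δ ≤ u ∨ ENNReal.ofReal e'.2 ≤ supNearOptimalPrice D u δ v} := fun d hd => by
    by_cases h : u < utility d v + δ
    · exact Or.inr (le_iSup_of_le (⟨d, hd⟩ : D) (if_pos h).ge)
    · exact Or.inl (not_lt.mp h)
  -- `e` is a limit of entries of `D`
  exact (closure_minimal hDS hS (hD he)).resolve_left (not_le.mpr hu)

/-- Upper semicontinuity of the maximal price at a maximizer: an argument by compactness. -/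
lemma iInf_supNearOptimalPrice_le (hC : IsClosed C) (hval : ∀ e ∈ C, ValidOutcome e)
    (hDC : D ⊆ C) (hmax : ∀ e' ∈ C, utility e' v ≤ utility e v)
    (htie : ∀ e' ∈ C, utility e' v = utility e v → e'.2 ≤ e.2) :
    ⨅ k : ℕ, supNearOptimalPrice D (utility e v) (1 / (k + 1)) v ≤ ENNReal.ofReal e.2 := by
  by_contra! hlt
  obtain ⟨r, hr, hrP⟩ := exists_between hlt
  set T : ℕ → Set (Outcome n) := fun k =>
    C ∩ {e' | utility e v - 1 / (k + 1) ≤ utility e' v} ∩ {e' | r ≤ ENNReal.ofReal e'.2}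
  have hTc : ∀ k, IsCompact (T k) := fun k =>
    (isCompact_inter_setOf_le_utility hC hval v _).inter_right
      (isClosed_le continuous_const (ENNReal.continuous_ofReal.comp continuous_snd))
  have hTne : ∀ k, (T k).Nonempty := fun k => by
    obtain ⟨⟨d, hd⟩, hdr⟩ := lt_iSup_iff.mp (hrP.trans_le (iInf_le _ k))
    split_ifs at hdr with h
    · exact ⟨d, ⟨hDC hd, show _ ≤ utility d v by linarith⟩, hdr.le⟩
    · exact absurd hdr not_lt_zero
  have hTanti : ∀ k, T (k + 1) ⊆ T k := by
    rintro k e' ⟨⟨he'C, he'u⟩, he'r⟩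
    refine ⟨⟨he'C, le_trans ?_ (show _ ≤ utility e' v from he'u)⟩, he'r⟩
    gcongr
    linarith
  obtain ⟨e', he'⟩ := (hTc 0).nonempty_iInter_of_sequence_nonempty_isCompact_isClosed T hTanti
    hTne fun k => (hTc k).isClosed
  simp only [mem_iInter] at he'
  have hu : utility e' v = utility e v := by
    have hlim : Tendsto (fun k : ℕ => utility e v - 1 / (k + 1)) atTop (𝓝 (utility e v)) := by
      simpa using tendsto_const_nhds.sub (tendsto_one_div_add_atTop_nhds_zero_nat (𝕜 := ℝ))
    exact le_antisymm (hmax e' (he' 0).1.1) (le_of_tendsto' hlim fun k => (he' k).1.2)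
  have := ENNReal.ofReal_le_ofReal (htie e' (he' 0).1.1 hu)
  exact absurd ((he' 0).2.trans this) (not_le.mpr hr)

lemma measurable_price_of_isMax {t : BuyerType n → Outcome n} (hC : IsClosed C)
    (hval : ∀ e ∈ C, ValidOutcome e) (ht : ∀ v, t v ∈ C)
    (hmax : ∀ v, ∀ e ∈ C, utility e v ≤ utility (t v) v)
    (htie : ∀ v, ∀ e ∈ C, utility e v = utility (t v) v → e.2 ≤ (t v).2) :
    Measurable fun v => (t v).2 := by
  obtain ⟨D, hDC, hDc, hD⟩ :=
    (TopologicalSpace.IsSeparable.of_separableSpace C).exists_countable_dense_subset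
  have : Countable D := hDc.to_subtype
  have hU : Measurable fun v => utility (t v) v := by
    have hUeq : (fun v => utility (t v) v) = fun v => ⨆ d : D, utility (d : Outcome n) v :=
      funext fun v => utility_eq_iSup_of_subset_closure hD hDC (ht v) (hmax v)
    rw [hUeq]
    exact Measurable.iSup fun d => measurable_utility (d : Outcome n)
  have hprice : (fun v => (t v).2) =
      fun v => (⨅ k : ℕ, supNearOptimalPrice D (utility (t v) v) (1 / (k + 1)) v).toReal := by
    funext v
    have hle : ∀ k : ℕ, ENNReal.ofReal (t v).2 ≤
        supNearOptimalPrice D (utility (t v) v) (1 / (k + 1)) v := fun k =>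
      ofReal_price_le_supNearOptimalPrice hD (ht v) (lt_add_of_pos_right _ (by positivity))
    rw [le_antisymm (iInf_supNearOptimalPrice_le hC hval hDC (hmax v) (htie v)) (le_iInf hle),
      ENNReal.toReal_ofReal (hval _ (ht v)).2]
  rw [hprice]
  exact (Measurable.iInf fun k => measurable_supNearOptimalPrice hU _).ennreal_toReal

lemma exists_isChoice (hC : IsClosed C) (hval : ∀ e ∈ C, ValidOutcome e)
    (h0 : zeroEntry n ∈ C) : ∃ t, IsChoice C t := by
  choose t ht hmax htie using exists_max_utility_max_price hC hval h0
  exact ⟨t, ht, hmax, htie, measurable_price_of_isMax hC hval ht hmax htie⟩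

end Choice

section Revenue
variable {n : ℕ} {E : Set (Outcome n)} {s : BuyerType n → Outcome n}

/-- Hart–Nisan: after scaling every price by `1 - ε`, a buyer can only switch to entries priced
at least `1 - ε` times what he paid before, whatever the tie-breaking. -/
lemma exists_isChoice_mul_price_le (hE : ∀ e ∈ E, ∀ i, 0 ≤ e.1 i ∧ e.1 i ≤ 1)
    (hs : ∀ v, s v ∈ E) (hmax : ∀ v, ∀ e ∈ E, utility e v ≤ utility (s v) v)
    (hIR : ∀ v, 0 ≤ utility (s v) v) {ε : ℝ} (hε : 0 < ε) (hε1 : ε ≤ 1) :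
    ∃ M t, IRMenu M ∧ IsChoice M t ∧ ∀ v, (1 - ε) * (s v).2 ≤ (t v).2 := by
  set D : Set (Outcome n) :=
    (fun e : Outcome n => (e.1, (1 - ε) * e.2)) '' {e ∈ E | 0 ≤ e.2} ∪ {zeroEntry n}
  have hDval : ∀ e ∈ D, ValidOutcome e := by
    rintro _ (⟨e, ⟨heE, hep⟩, rfl⟩ | rfl)
    · exact ⟨hE e heE, mul_nonneg (by linarith) hep⟩
    · exact ⟨fun _ => ⟨le_rfl, zero_le_one⟩, le_rfl⟩
  have hCval : ∀ e ∈ closure D, ValidOutcome e := fun e he =>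
    closure_minimal hDval isClosed_setOf_validOutcome he
  have h0 : zeroEntry n ∈ closure D := subset_closure (Or.inr rfl)
  have hscaled : ∀ v, ∀ c ∈ closure D,
      (1 - ε) * ∑ i, c.1 i * (v i : ℝ) - c.2 ≤ (1 - ε) * utility (s v) v := by
    intro v
    have hcl : IsClosed {c : Outcome n |
        (1 - ε) * ∑ i, c.1 i * (v i : ℝ) - c.2 ≤ (1 - ε) * utility (s v) v} :=
      isClosed_le (by fun_prop) continuous_const
    refine fun c hc => closure_minimal ?_ hcl hc
    rintro _ (⟨e, ⟨heE, -⟩, rfl⟩ | rfl)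
    · have := mul_le_mul_of_nonneg_left (hmax v e heE) (sub_nonneg.2 hε1)
      simp only [utility, mem_ofPred_eq] at this ⊢
      linarith
    · simpa [zeroEntry] using mul_nonneg (sub_nonneg.2 hε1) (hIR v)
  obtain ⟨t, ht⟩ := exists_isChoice isClosed_closure hCval h0
  refine ⟨closure D, t, ⟨hCval, h0⟩, ht, fun v => ?_⟩
  rcases lt_or_ge (s v).2 0 with hneg | hpos
  · nlinarith [(hCval _ (ht.1 v)).2]
  · have hge := ht.2.1 v _ (subset_closure (Or.inl ⟨s v, ⟨hs v, hpos⟩, rfl⟩))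
    have hkey := hscaled v _ (ht.1 v)
    simp only [utility] at hge hkey
    nlinarith

lemma lintegral_price_le_Rev (F : Measure (BuyerType n))
    (hE : ∀ e ∈ E, ∀ i, 0 ≤ e.1 i ∧ e.1 i ≤ 1) (hs : ∀ v, s v ∈ E)
    (hmax : ∀ v, ∀ e ∈ E, utility e v ≤ utility (s v) v) (hIR : ∀ v, 0 ≤ utility (s v) v) :
    ∫⁻ v, ENNReal.ofReal (s v).2 ∂F ≤ Rev F := by
  refine ENNReal.le_of_forall_lt_one_mul_le fun a ha => ?_
  have ha1 : a.toReal < 1 := by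
    simpa using (ENNReal.toReal_lt_toReal ha.ne_top ENNReal.one_ne_top).2 ha
  obtain ⟨M, t, hM, ht, hle⟩ := exists_isChoice_mul_price_le hE hs hmax hIR
    (ε := 1 - a.toReal) (by linarith) (by linarith [a.toReal_nonneg])
  calc a * ∫⁻ v, ENNReal.ofReal (s v).2 ∂F
      = ∫⁻ v, ENNReal.ofReal ((1 - (1 - a.toReal)) * (s v).2) ∂F := by
        rw [← lintegral_const_mul' _ _ ha.ne_top]
        simp_rw [sub_sub_cancel, ENNReal.ofReal_mul ENNReal.toReal_nonneg,
          ENNReal.ofReal_toReal ha.ne_top]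
    _ ≤ revenue t F := lintegral_mono fun v => ENNReal.ofReal_le_ofReal (hle v)
    _ ≤ Rev F := revenue_le_Rev hM ht F

lemma lintegral_price_comp_le_Rev {k : ℕ} {M : Set (Outcome k)} {t : BuyerType k → Outcome k}
    (hM : IRMenu M) (ht : IsChoice M t) (F : Measure (BuyerType n))
    (φ : BuyerType n → BuyerType k) (r : Outcome k → Outcome n)
    (hr : ∀ e ∈ M, ∀ i, 0 ≤ (r e).1 i ∧ (r e).1 i ≤ 1)
    (hu : ∀ e v, utility (r e) v = utility e (φ v)) :
    ∫⁻ v, ENNReal.ofReal (r (t (φ v))).2 ∂F ≤ Rev F := by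
  refine lintegral_price_le_Rev F (E := r '' M) (forall_mem_image.2 hr)
    (fun v => mem_image_of_mem r (ht.1 _)) ?_ fun v => ?_
  · rintro v _ ⟨e, he, rfl⟩
    rw [hu, hu]
    exact ht.2.1 _ e he
  · rw [hu, ← utility_zeroEntry (φ v)]
    exact ht.2.1 _ _ hM.2

def bundlePayment (θ : ℝ) (v : BuyerType n) : ℝ≥0∞ :=
  if θ ≤ ∑ i, (v i : ℝ) then ENNReal.ofReal θ else 0

lemma measurable_bundlePayment : Measurable fun q : ℝ × BuyerType n => bundlePayment q.1 q.2 :=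
  Measurable.ite (measurableSet_le measurable_fst (measurable_sum_coe.comp measurable_snd))
    measurable_fst.ennreal_ofReal measurable_const

lemma lintegral_bundlePayment_le_Rev (F : Measure (BuyerType n)) (θ : ℝ) :
    ∫⁻ v, bundlePayment θ v ∂F ≤ Rev F := by
  have hbundle : ∀ v : BuyerType n,
      utility ((fun _ => 1, θ) : Outcome n) v = ∑ i, (v i : ℝ) - θ := by simp [utility]
  convert lintegral_price_le_Rev F (E := {zeroEntry n, (fun _ => 1, θ)})
    (s := fun v => if θ ≤ ∑ i, (v i : ℝ) then (fun _ => 1, θ) else zeroEntry n) ?_ ?_ ?_ ?_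
    using 2
  · funext v
    unfold bundlePayment
    split_ifs <;> simp [zeroEntry]
  · rintro _ (rfl | rfl) i <;> simp [zeroEntry]
  · intro v
    split_ifs <;> simp
  · rintro v _ (rfl | rfl) <;> split_ifs <;> simp only [utility_zeroEntry, hbundle] <;> linarith
  · intro v
    split_ifs <;> simp only [utility_zeroEntry, hbundle] <;> linarith

lemma ofReal_le_ofReal_sub_add_bundlePayment (p : ℝ) {θ : ℝ} {v : BuyerType n}
    (h : θ ≤ ∑ i, (v i : ℝ)) :
    ENNReal.ofReal p ≤ ENNReal.ofReal (p - θ) + bundlePayment θ v := by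
  rw [bundlePayment, if_pos h]
  simpa using ENNReal.ofReal_add_le (p := p - θ) (q := θ)

end Revenue

lemma lintegral_prod_le_of_forall_right {α β : Type*} [MeasurableSpace α] [MeasurableSpace β]
    {μ : Measure α} {ν : Measure β} [SFinite μ] [IsProbabilityMeasure ν] {f : α × β → ℝ≥0∞}
    (hf : Measurable f) {c : ℝ≥0∞} (h : ∀ y, ∫⁻ x, f (x, y) ∂μ ≤ c) :
    ∫⁻ z, f z ∂μ.prod ν ≤ c := by
  rw [lintegral_prod_symm' f hf]
  exact (lintegral_mono h).trans (by simp)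

lemma lintegral_prod_le_of_forall_left {α β : Type*} [MeasurableSpace α] [MeasurableSpace β]
    {μ : Measure α} {ν : Measure β} [IsProbabilityMeasure μ] [SFinite ν] {f : α × β → ℝ≥0∞}
    (hf : Measurable f) {c : ℝ≥0∞} (h : ∀ x, ∫⁻ y, f (x, y) ∂ν ≤ c) :
    ∫⁻ z, f z ∂μ.prod ν ≤ c := by
  rw [lintegral_prod f hf.aemeasurable]
  exact (lintegral_mono h).trans (by simp)

section Product
variable {m n : ℕ} {M : Set (Outcome (m + n))} {t : BuyerType (m + n) → Outcome (m + n)}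

/-- The marginal menu on the first `m` items when the last `n` values are `w`. -/
def restrictLeft (w : BuyerType n) (e : Outcome (m + n)) : Outcome m :=
  (fun i => e.1 (Fin.castAdd n i), e.2 - ∑ j, e.1 (Fin.natAdd m j) * w j)

def restrictRight (v : BuyerType m) (e : Outcome (m + n)) : Outcome n :=
  (fun j => e.1 (Fin.natAdd m j), e.2 - ∑ i, e.1 (Fin.castAdd n i) * v i)

lemma utility_restrictLeft (w : BuyerType n) (e : Outcome (m + n)) (v : BuyerType m) :
    utility (restrictLeft w e) v = utility e (Fin.append v w) := by
  simp only [utility, restrictLeft, Fin.sum_univ_add, Fin.append_left, Fin.append_right]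
  ring

lemma utility_restrictRight (v : BuyerType m) (e : Outcome (m + n)) (w : BuyerType n) :
    utility (restrictRight v e) w = utility e (Fin.append v w) := by
  simp only [utility, restrictRight, Fin.sum_univ_add, Fin.append_left, Fin.append_right]
  ring

lemma lintegral_price_sub_le_Rev_left (hM : IRMenu M) (ht : IsChoice M t)
    (F : Measure (BuyerType m)) (w : BuyerType n) :
    ∫⁻ v, ENNReal.ofReal ((t (Fin.append v w)).2 - ∑ j, (w j : ℝ)) ∂F ≤ Rev F := by
  refine (lintegral_mono fun v => ENNReal.ofReal_le_ofReal ?_).trans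
    (lintegral_price_comp_le_Rev hM ht F (Fin.append · w) (restrictLeft w)
      (fun e he i => (hM.1 e he).1 _) (utility_restrictLeft w))
  have hvalid := (hM.1 _ (ht.1 (Fin.append v w))).1
  have := sum_mul_le_sum_of_le_one (fun j => (hvalid (Fin.natAdd m j)).2) w
  simp only [restrictLeft]
  linarith

lemma lintegral_price_sub_le_Rev_right (hM : IRMenu M) (ht : IsChoice M t)
    (G : Measure (BuyerType n)) (v : BuyerType m) :
    ∫⁻ w, ENNReal.ofReal ((t (Fin.append v w)).2 - ∑ i, (v i : ℝ)) ∂G ≤ Rev G := by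
  refine (lintegral_mono fun w => ENNReal.ofReal_le_ofReal ?_).trans
    (lintegral_price_comp_le_Rev hM ht G (Fin.append v ·) (restrictRight v)
      (fun e he j => (hM.1 e he).1 _) (utility_restrictRight v))
  have hvalid := (hM.1 _ (ht.1 (Fin.append v w))).1
  have := sum_mul_le_sum_of_le_one (fun i => (hvalid (Fin.castAdd n i)).2) v
  simp only [restrictRight]
  linarith

def splitPayment {k l : ℕ} (p : ℝ) (v : BuyerType k) (w : BuyerType l) : ℝ≥0∞ :=
  ENNReal.ofReal (p - ∑ j, (w j : ℝ)) + bundlePayment (∑ j, (w j : ℝ)) v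

lemma ofReal_le_splitPayment_add (p : ℝ) (v : BuyerType m) (w : BuyerType n) :
    ENNReal.ofReal p ≤ splitPayment p v w + splitPayment p w v := by
  rcases le_total (∑ j, (w j : ℝ)) (∑ i, (v i : ℝ)) with h | h
  · exact (ofReal_le_ofReal_sub_add_bundlePayment p h).trans le_self_add
  · exact (ofReal_le_ofReal_sub_add_bundlePayment p h).trans le_add_self

lemma measurable_splitPayment {p : BuyerType m × BuyerType n → ℝ} (hp : Measurable p) :
    Measurable fun vw => splitPayment (p vw) vw.1 vw.2 :=
  (hp.sub (measurable_sum_coe.comp measurable_snd)).ennreal_ofReal.add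
    (measurable_bundlePayment.comp ((measurable_sum_coe.comp measurable_snd).prodMk measurable_fst))

lemma measurable_splitPayment_swap {p : BuyerType m × BuyerType n → ℝ} (hp : Measurable p) :
    Measurable fun vw => splitPayment (p vw) vw.2 vw.1 :=
  (hp.sub (measurable_sum_coe.comp measurable_fst)).ennreal_ofReal.add
    (measurable_bundlePayment.comp ((measurable_sum_coe.comp measurable_fst).prodMk measurable_snd))

lemma lintegral_splitPayment_le_left (hM : IRMenu M) (ht : IsChoice M t)
    (F : Measure (BuyerType m)) (G : Measure (BuyerType n)) [SFinite F]
    [IsProbabilityMeasure G] :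
    ∫⁻ vw, splitPayment (t (Fin.append vw.1 vw.2)).2 vw.1 vw.2 ∂F.prod G ≤ 2 * Rev F := by
  refine lintegral_prod_le_of_forall_right
    (measurable_splitPayment (ht.2.2.2.comp (by fun_prop))) fun w => ?_
  simp only [splitPayment, two_mul]
  exact (lintegral_add_right _ (measurable_bundlePayment.comp measurable_prodMk_left)).trans_le
    (add_le_add (lintegral_price_sub_le_Rev_left hM ht F w) (lintegral_bundlePayment_le_Rev F _))

lemma lintegral_splitPayment_le_right (hM : IRMenu M) (ht : IsChoice M t)
    (F : Measure (BuyerType m)) (G : Measure (BuyerType n)) [IsProbabilityMeasure F]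
    [SFinite G] :
    ∫⁻ vw, splitPayment (t (Fin.append vw.1 vw.2)).2 vw.2 vw.1 ∂F.prod G ≤ 2 * Rev G := by
  refine lintegral_prod_le_of_forall_left
    (measurable_splitPayment_swap (ht.2.2.2.comp (by fun_prop))) fun v => ?_
  simp only [splitPayment, two_mul]
  exact (lintegral_add_right _ (measurable_bundlePayment.comp measurable_prodMk_left)).trans_le
    (add_le_add (lintegral_price_sub_le_Rev_right hM ht G v) (lintegral_bundlePayment_le_Rev G _))

end Product

theorem rev_prod_le_two_mul_sum_general
    (m n : ℕ)
    (F : Measure (BuyerType m)) (G : Measure (BuyerType n))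
    (hF : IsProbabilityMeasure F) (hG : IsProbabilityMeasure G) :
    Rev ((F.prod G).map fun vw : BuyerType m × BuyerType n => Fin.append vw.1 vw.2) ≤
      2 * (Rev F + Rev G) := by
  refine iSup₂_le fun ⟨M, t⟩ ⟨hM, ht⟩ => ?_
  have hp : Measurable fun vw : BuyerType m × BuyerType n => (t (Fin.append vw.1 vw.2)).2 :=
    ht.2.2.2.comp (by fun_prop)
  rw [revenue, lintegral_map ht.2.2.2.ennreal_ofReal (by fun_prop)]
  calc ∫⁻ vw, ENNReal.ofReal (t (Fin.append vw.1 vw.2)).2 ∂F.prod G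
      ≤ ∫⁻ vw, splitPayment (t (Fin.append vw.1 vw.2)).2 vw.1 vw.2 +
          splitPayment (t (Fin.append vw.1 vw.2)).2 vw.2 vw.1 ∂F.prod G :=
        lintegral_mono fun vw => ofReal_le_splitPayment_add _ vw.1 vw.2
    _ = ∫⁻ vw, splitPayment (t (Fin.append vw.1 vw.2)).2 vw.1 vw.2 ∂F.prod G +
          ∫⁻ vw, splitPayment (t (Fin.append vw.1 vw.2)).2 vw.2 vw.1 ∂F.prod G :=
        lintegral_add_left (measurable_splitPayment hp) _
    _ ≤ 2 * Rev F + 2 * Rev G :=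
        add_le_add (lintegral_splitPayment_le_left hM ht F G)
          (lintegral_splitPayment_le_right hM ht F G)
    _ = 2 * (Rev F + Rev G) := (mul_add _ _ _).symm

/-- Hart–Nisan: `Rev(F × G) ≤ 2·(Rev(F) + Rev(G))`, where the product
distribution on `m + n` items is obtained by appending independent value vectors. -/
theorem rev_prod_le_two_mul_sum
    (m n : ℕ) (hm : 1 ≤ m) (hn : 1 ≤ n)
    (F : Measure (BuyerType m)) (G : Measure (BuyerType n))
    (hF : IsProbabilityMeasure F) (hG : IsProbabilityMeasure G) :
    Rev ((F.prod G).map fun vw : BuyerType m × BuyerType n => Fin.append vw.1 vw.2) ≤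
      2 * (Rev F + Rev G) :=
  rev_prod_le_two_mul_sum_general m n F G hF hG

end
end
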